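/- Let C > 0 and let ω : 𝔻 → (0,∞) be a C¹ weight satisfying (1−|z|²)|∇ω(z)| ≤ C ω(z) for all z ∈ 𝔻. Then ω(z) ≤ e^{C δ(z,w)} ω(w) for all z, w ∈ 𝔻, where δ is the hyperbolic distance on 𝔻. -/

import Mathlib

open Complex MeasureTheory Set Filter

noncomputable section

/-- The open unit disc in the complex plane. -/
def unitDisc : Set ℂ := Metric.ball 0 1

/-- The Möbius involution `φ_a(z) = (a - z)/(1 - conj(a) z)`. -/
def mobius (a z : ℂ) : ℂ := (a - z) / (1 - (starRingEnd ℂ) a * z)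

/-- The hyperbolic distance on the unit disc. -/
def hypDist (a z : ℂ) : ℝ :=
  (1 / 2) * Real.log ((1 + ‖mobius a z‖) / (1 - ‖mobius a z‖))

/-- The `BMOA` Garsia-type seminorm squared at the point `a`, with normalized
area measure `dm = dx dy / π`. -/
def bmoaSemi (f : ℂ → ℂ) (a : ℂ) : ℝ :=
  (Real.pi)⁻¹ * ∫ z in unitDisc, ‖deriv f z‖ ^ 2 * (1 - ‖mobius a z‖ ^ 2)

/-- `f` is an analytic function of bounded mean oscillation. -/
def IsBMOA (f : ℂ → ℂ) : Prop :=
  DifferentiableOn ℂ f unitDisc ∧ ∃ C : ℝ, ∀ a ∈ unitDisc, bmoaSemi f a ≤ C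

/-- `f` is an analytic function of vanishing mean oscillation. -/
def IsVMOA (f : ℂ → ℂ) : Prop :=
  IsBMOA f ∧ ∀ ε > 0, ∃ r < 1, ∀ a ∈ unitDisc, r < ‖a‖ → bmoaSemi f a < ε

/-- The Bloch quantity `|f'(z)| (1 - |z|²)`. -/
def blochSemi (f : ℂ → ℂ) (z : ℂ) : ℝ := ‖deriv f z‖ * (1 - ‖z‖ ^ 2)

/-- `f` belongs to the Bloch space. -/
def IsBloch (f : ℂ → ℂ) : Prop :=
  DifferentiableOn ℂ f unitDisc ∧ ∃ C : ℝ, ∀ z ∈ unitDisc, blochSemi f z ≤ C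

/-- `f` belongs to the little Bloch space. -/
def IsLittleBloch (f : ℂ → ℂ) : Prop :=
  IsBloch f ∧ ∀ ε > 0, ∃ r < 1, ∀ z ∈ unitDisc, r < ‖z‖ → blochSemi f z < ε

/-- The `BMOA` norm `|f(0)| + ‖f‖_*`. -/
def bmoaNorm (f : ℂ → ℂ) : ℝ :=
  ‖f 0‖ + Real.sqrt (⨆ a : unitDisc, bmoaSemi f (a : ℂ))

/-- The Bloch norm `|f(0)| + sup_z |f'(z)|(1-|z|²)`. -/
def blochNorm (f : ℂ → ℂ) : ℝ :=
  ‖f 0‖ + ⨆ z : unitDisc, blochSemi f (z : ℂ)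

/-- `φ` is a semigroup of holomorphic self-maps of the unit disc. -/
def IsHoloSemigroup (φ : ℝ → ℂ → ℂ) : Prop :=
  (∀ t : ℝ, 0 ≤ t → DifferentiableOn ℂ (φ t) unitDisc ∧ MapsTo (φ t) unitDisc unitDisc) ∧
  (∀ z ∈ unitDisc, φ 0 z = z) ∧
  (∀ t : ℝ, 0 ≤ t → ∀ s : ℝ, 0 ≤ s → ∀ z ∈ unitDisc, φ (t + s) z = φ t (φ s z)) ∧
  (∀ K ⊆ unitDisc, IsCompact K →
    TendstoUniformlyOn (fun t z => φ t z) id (nhdsWithin 0 (Ioi 0)) K)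

/-- The maximal subspace of strong continuity `[φ_t, BMOA]`. -/
def maxSubspaceBMOA (φ : ℝ → ℂ → ℂ) : Set (ℂ → ℂ) :=
  {f | IsBMOA f ∧
    Tendsto (fun t => bmoaNorm (fun z => f (φ t z) - f z)) (nhdsWithin 0 (Ioi 0)) (nhds 0)}

/-- The maximal subspace of strong continuity `[φ_t, 𝓑]`. -/
def maxSubspaceBloch (φ : ℝ → ℂ → ℂ) : Set (ℂ → ℂ) :=
  {f | IsBloch f ∧
    Tendsto (fun t => blochNorm (fun z => f (φ t z) - f z)) (nhdsWithin 0 (Ioi 0)) (nhds 0)}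

/-- `G` is the infinitesimal generator of the semigroup `φ`. -/
def IsGenerator (φ : ℝ → ℂ → ℂ) (G : ℂ → ℂ) : Prop :=
  DifferentiableOn ℂ G unitDisc ∧
  ∀ z ∈ unitDisc,
    Tendsto (fun t : ℝ => (φ t z - z) / (t : ℂ)) (nhdsWithin 0 (Ioi 0)) (nhds (G z))

/-- The semigroup is elliptic: its Denjoy–Wolff point lies in the disc. -/
def IsElliptic (φ : ℝ → ℂ → ℂ) : Prop :=
  ∃ τ ∈ unitDisc, ∀ t : ℝ, 0 ≤ t → φ t τ = τ

/-- The logarithmic vanishing Bloch condition (LVB) on a generator `G`. -/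
def LVB (G : ℂ → ℂ) : Prop :=
  ∀ ε > 0, ∃ r < 1, ∀ z ∈ unitDisc, r < ‖z‖ →
    (1 - ‖z‖ ^ 2) / ‖G z‖ * Real.log (1 / (1 - ‖z‖ ^ 2)) < ε

/-- The logarithmic vanishing mean oscillation condition (LVMO) on a generator `G`. -/
def LVMO (G : ℂ → ℂ) : Prop :=
  ∀ ε > 0, ∃ r < 1, ∀ a ∈ unitDisc, r < ‖a‖ →
    (Real.log (Real.exp 1 / (1 - ‖a‖ ^ 2))) ^ 2 *
      ((Real.pi)⁻¹ * ∫ z in unitDisc, (1 - ‖mobius a z‖ ^ 2) / ‖G z‖ ^ 2) < ε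

/-- `f` belongs to the logarithmic little Bloch space `𝓑_{log,0}`. -/
def InBlochLog0 (f : ℂ → ℂ) : Prop :=
  ∀ ε > 0, ∃ r < 1, ∀ z ∈ unitDisc, r < ‖z‖ →
    ‖deriv f z‖ * (1 - ‖z‖ ^ 2) * Real.log (Real.exp 1 / (1 - ‖z‖ ^ 2)) < ε

/-- `f` belongs to `VMOA_log`. -/
def InVMOAlog (f : ℂ → ℂ) : Prop :=
  ∀ ε > 0, ∃ r < 1, ∀ a ∈ unitDisc, r < ‖a‖ →
    (Real.log (Real.exp 1 / (1 - ‖a‖ ^ 2))) ^ 2 * bmoaSemi f a < ε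

/-- Hyperbolic midpoint of the segment `[0, w]`. -/
def wstar (w : ℂ) : ℂ :=
  (((1 - Real.sqrt (1 - ‖w‖ ^ 2)) / ‖w‖ ^ 2 : ℝ) : ℂ) * w

/-- The building-block function `β_w(z) = Log(e / (1 + conj(w) φ_{w*}(z)))`. -/
def betaB (w z : ℂ) : ℂ :=
  Complex.log ((Real.exp 1 : ℂ) / (1 + (starRingEnd ℂ) w * mobius (wstar w) z))

/-- The (invariant) Carleson box `S(I_u)` associated with a point `u ∈ 𝔻 \ {0}`. -/
def carlesonBox (u : ℂ) : Set ℂ :=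
  {z ∈ unitDisc | ((starRingEnd ℂ) u * mobius u z).re ≤ 0}

/-- The generalized Volterra operator `T_g f(z) = ∫₀^z f(ζ) g'(ζ) dζ`. -/
def volterra (g f : ℂ → ℂ) (z : ℂ) : ℂ :=
  z * ∫ t in (0:ℝ)..1, f ((t : ℂ) * z) * deriv g ((t : ℂ) * z)

/-! Along the geodesic `γ t = φ_z (t φ_z(w))`, `t ∈ [0, 1]`, from `z` to `w`, the Schwarz–Pick
identity `|φ_z'(ζ)| (1 - |ζ|²) = 1 - |φ_z(ζ)|²` gives `|γ'(t)| / (1 - |γ t|²) = r / (1 - t²r²)`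
with `r = |φ_z(w)|`, and this is the derivative of `artanh (t r)`. So the regularity condition makes
`log ω ∘ γ + C artanh (t r)` nondecreasing, and comparing its endpoints gives the claim because
`δ(z, w) = artanh r`. -/

theorem isOpen_unitDisc : IsOpen unitDisc := Metric.isOpen_ball

theorem mem_unitDisc {z : ℂ} : z ∈ unitDisc ↔ ‖z‖ < 1 := mem_ball_zero_iff

namespace Real

theorem hasDerivAt_artanh {x : ℝ} (hx : x ∈ Ioo (-1) 1) :
    HasDerivAt artanh (1 - x ^ 2)⁻¹ x := by
  have hp : 0 < 1 + x := by linarith [hx.1]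
  have hm : 0 < 1 - x := by linarith [hx.2]
  have heq : (fun y => (Real.log (1 + y) - Real.log (1 - y)) / 2) =ᶠ[nhds x] artanh := by
    filter_upwards [Ioo_mem_nhds hx.1 hx.2] with y hy
    rw [artanh_eq_half_log (Ioo_subset_Icc_self hy),
      log_div (by linarith [hy.1]) (by linarith [hy.2])]
    ring
  have hderiv := (((hasDerivAt_id x).const_add 1).log hp.ne').sub
    (((hasDerivAt_id x).const_sub 1).log hm.ne') |>.div_const 2
  refine (hderiv.congr_of_eventuallyEq heq.symm).congr_deriv ?_
  simp only [id]
  rw [show 1 - x ^ 2 = (1 + x) * (1 - x) by ring]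
  field_simp
  ring

end Real

section Mobius

variable {a ζ : ℂ}

theorem sq_norm_one_sub_conj_mul_sub_sq_norm_sub (a ζ : ℂ) :
    ‖1 - (starRingEnd ℂ) a * ζ‖ ^ 2 - ‖a - ζ‖ ^ 2 = (1 - ‖a‖ ^ 2) * (1 - ‖ζ‖ ^ 2) := by
  simp only [Complex.sq_norm, Complex.normSq_apply, Complex.sub_re,
    Complex.sub_im, Complex.mul_re, Complex.mul_im, Complex.one_re, Complex.one_im,
    Complex.conj_re, Complex.conj_im]
  ring

theorem one_sub_conj_mul_ne_zero (ha : ‖a‖ < 1) (hζ : ‖ζ‖ < 1) :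
    1 - (starRingEnd ℂ) a * ζ ≠ 0 := by
  have : ‖(starRingEnd ℂ) a * ζ‖ < 1 := by
    rw [norm_mul, RCLike.norm_conj]
    nlinarith [norm_nonneg a, norm_nonneg ζ]
  intro h
  rw [← sub_eq_zero.mp h, norm_one] at this
  exact this.false

theorem one_sub_norm_mobius_sq (ha : ‖a‖ < 1) (hζ : ‖ζ‖ < 1) :
    1 - ‖mobius a ζ‖ ^ 2 = (1 - ‖a‖ ^ 2) * (1 - ‖ζ‖ ^ 2) / ‖1 - (starRingEnd ℂ) a * ζ‖ ^ 2 := by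
  have hd : ‖1 - (starRingEnd ℂ) a * ζ‖ ^ 2 ≠ 0 := by
    simpa using one_sub_conj_mul_ne_zero ha hζ
  rw [mobius, norm_div, div_pow, ← sq_norm_one_sub_conj_mul_sub_sq_norm_sub, eq_div_iff hd,
    sub_mul, div_mul_cancel₀ _ hd, one_mul]

theorem norm_mobius_lt_one (ha : ‖a‖ < 1) (hζ : ‖ζ‖ < 1) : ‖mobius a ζ‖ < 1 := by
  have hpos : 0 < 1 - ‖mobius a ζ‖ ^ 2 := by
    rw [one_sub_norm_mobius_sq ha hζ]
    have hd := norm_pos_iff.mpr (one_sub_conj_mul_ne_zero ha hζ)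
    have ha2 : 0 < 1 - ‖a‖ ^ 2 := by nlinarith [norm_nonneg a]
    have hζ2 : 0 < 1 - ‖ζ‖ ^ 2 := by nlinarith [norm_nonneg ζ]
    positivity
  nlinarith [norm_nonneg (mobius a ζ)]

theorem mobius_mobius (ha : ‖a‖ < 1) (hζ : ‖ζ‖ < 1) : mobius a (mobius a ζ) = ζ := by
  have hd := one_sub_conj_mul_ne_zero ha hζ
  have hd' := one_sub_conj_mul_ne_zero ha (norm_mobius_lt_one ha hζ)
  rw [mobius] at hd'
  rw [mobius, mobius, div_eq_iff hd']
  linear_combination (ζ - a) * mul_inv_cancel₀ hd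

theorem mobius_zero (a : ℂ) : mobius a 0 = a := by
  simp [mobius]

theorem hasDerivAt_mobius (hd : 1 - (starRingEnd ℂ) a * ζ ≠ 0) :
    HasDerivAt (mobius a) (((‖a‖ ^ 2 - 1 : ℝ) : ℂ) / (1 - (starRingEnd ℂ) a * ζ) ^ 2) ζ := by
  have hnum : HasDerivAt (fun s : ℂ => a - s) (-1) ζ := (hasDerivAt_id ζ).const_sub a
  have hden : HasDerivAt (fun s : ℂ => 1 - (starRingEnd ℂ) a * s) (-(starRingEnd ℂ) a) ζ := by
    simpa using ((hasDerivAt_id ζ).const_mul ((starRingEnd ℂ) a)).const_sub 1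
  refine (hnum.div hden hd).congr_deriv ?_
  push_cast
  rw [← Complex.mul_conj']
  ring

theorem norm_deriv_mobius_mul (ha : ‖a‖ < 1) (hζ : ‖ζ‖ < 1) :
    ‖deriv (mobius a) ζ‖ * (1 - ‖ζ‖ ^ 2) = 1 - ‖mobius a ζ‖ ^ 2 := by
  have hd := one_sub_conj_mul_ne_zero ha hζ
  rw [(hasDerivAt_mobius hd).deriv, one_sub_norm_mobius_sq ha hζ, norm_div, norm_pow,
    Complex.norm_real, Real.norm_eq_abs, abs_of_nonpos (by nlinarith [norm_nonneg a])]
  ring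

theorem mul_norm_deriv_mobius_le {M K : ℝ} (ha : ‖a‖ < 1) (hζ : ‖ζ‖ < 1)
    (h : (1 - ‖mobius a ζ‖ ^ 2) * M ≤ K) :
    M * ‖deriv (mobius a) ζ‖ ≤ (1 - ‖ζ‖ ^ 2)⁻¹ * K := by
  have hζ2 : 0 < 1 - ‖ζ‖ ^ 2 := by nlinarith [norm_nonneg ζ]
  rw [← norm_deriv_mobius_mul ha hζ] at h
  rw [le_inv_mul_iff₀ hζ2]
  linarith

theorem hypDist_eq_artanh (ha : ‖a‖ < 1) (hζ : ‖ζ‖ < 1) :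
    hypDist a ζ = Real.artanh ‖mobius a ζ‖ := by
  rw [hypDist, Real.artanh_eq_half_log ⟨by linarith [norm_nonneg (mobius a ζ)],
    (norm_mobius_lt_one ha hζ).le⟩]

theorem hasDerivAt_mobius_ofReal_mul {u : ℂ} {t : ℝ} (ha : ‖a‖ < 1) (htu : ‖(t : ℂ) * u‖ < 1) :
    HasDerivAt (fun s : ℝ => mobius a (s * u)) (deriv (mobius a) (t * u) * u) t := by
  have hmob : HasDerivAt (mobius a) (deriv (mobius a) (t * u)) (t * u) :=
    (hasDerivAt_mobius (one_sub_conj_mul_ne_zero ha htu)).differentiableAt.hasDerivAt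
  exact (hmob.comp (t : ℂ) (hasDerivAt_mul_const u)).comp_ofReal

end Mobius

theorem le_exp_sub_mul_of_norm_fderiv_mul_norm_deriv_le {E : Type*} [NormedAddCommGroup E]
    [NormedSpace ℝ E] {ω : E → ℝ} {γ γ' : ℝ → E} {ρ ρ' : ℝ → ℝ} {a b : ℝ} (hab : a ≤ b)
    (hγ : ∀ t ∈ Icc a b, HasDerivAt γ (γ' t) t) (hρ : ∀ t ∈ Icc a b, HasDerivAt ρ (ρ' t) t)
    (hω : ∀ t ∈ Icc a b, DifferentiableAt ℝ ω (γ t)) (hpos : ∀ t ∈ Icc a b, 0 < ω (γ t))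
    (hbound : ∀ t ∈ Icc a b, ‖fderiv ℝ ω (γ t)‖ * ‖γ' t‖ ≤ ρ' t * ω (γ t)) :
    ω (γ a) ≤ Real.exp (ρ b - ρ a) * ω (γ b) := by
  set F : ℝ → ℝ := fun t => Real.log (ω (γ t)) + ρ t
  set F' : ℝ → ℝ := fun t => fderiv ℝ ω (γ t) (γ' t) / ω (γ t) + ρ' t
  have hF : ∀ t ∈ Icc a b, HasDerivAt F (F' t) t := fun t ht =>
    (((hω t ht).hasFDerivAt.comp_hasDerivAt t (hγ t ht)).log (hpos t ht).ne').add (hρ t ht)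
  have hF' : ∀ t ∈ Icc a b, 0 ≤ F' t := by
    intro t ht
    have hle : -(fderiv ℝ ω (γ t) (γ' t)) ≤ ρ' t * ω (γ t) := by
      have := (fderiv ℝ ω (γ t)).le_opNorm (γ' t)
      rw [Real.norm_eq_abs] at this
      linarith [neg_le_abs (fderiv ℝ ω (γ t) (γ' t)), hbound t ht]
    have hdiv : -ρ' t ≤ fderiv ℝ ω (γ t) (γ' t) / ω (γ t) := by
      rw [le_div_iff₀ (hpos t ht)]
      linarith
    simp only [F']
    linarith
  have hmono : MonotoneOn F (Icc a b) := by
    refine monotoneOn_of_hasDerivWithinAt_nonneg (convex_Icc a b)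
      (fun t ht => (hF t ht).continuousAt.continuousWithinAt)
      (fun t ht => (hF t (interior_subset ht)).hasDerivWithinAt)
      (fun t ht => hF' t (interior_subset ht))
  have hFab : Real.log (ω (γ a)) ≤ Real.log (ω (γ b)) + (ρ b - ρ a) := by
    linarith [hmono (left_mem_Icc.mpr hab) (right_mem_Icc.mpr hab) hab]
  calc ω (γ a) = Real.exp (Real.log (ω (γ a))) :=
        (Real.exp_log (hpos a (left_mem_Icc.mpr hab))).symm
    _ ≤ Real.exp (Real.log (ω (γ b)) + (ρ b - ρ a)) := Real.exp_le_exp.mpr hFab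
    _ = Real.exp (ρ b - ρ a) * ω (γ b) := by
      rw [Real.exp_add, Real.exp_log (hpos b (right_mem_Icc.mpr hab)), mul_comm]

theorem weight_le_exp_artanh_mul_mobius {ω : ℂ → ℝ} {C : ℝ} {a u : ℂ} (ha : ‖a‖ < 1)
    (hu : ‖u‖ < 1) (hω : DifferentiableOn ℝ ω unitDisc) (hpos : ∀ z ∈ unitDisc, 0 < ω z)
    (hreg : ∀ z ∈ unitDisc, (1 - ‖z‖ ^ 2) * ‖fderiv ℝ ω z‖ ≤ C * ω z) :
    ω a ≤ Real.exp (C * Real.artanh ‖u‖) * ω (mobius a u) := by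
  have hray : ∀ t ∈ Icc (0 : ℝ) 1, ‖(t : ℂ) * u‖ = t * ‖u‖ ∧ t * ‖u‖ < 1 := fun t ht =>
    ⟨by rw [norm_mul, Complex.norm_real, Real.norm_of_nonneg ht.1],
      by nlinarith [norm_nonneg u, ht.2]⟩
  have hray_lt : ∀ t ∈ Icc (0 : ℝ) 1, ‖(t : ℂ) * u‖ < 1 := fun t ht =>
    (hray t ht).1 ▸ (hray t ht).2
  have hγ : ∀ t ∈ Icc (0 : ℝ) 1, mobius a (t * u) ∈ unitDisc := fun t ht =>
    mem_unitDisc.mpr (norm_mobius_lt_one ha (hray_lt t ht))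
  have hρ : ∀ t ∈ Icc (0 : ℝ) 1, HasDerivAt (fun s => C * Real.artanh (s * ‖u‖))
      (C * ((1 - (t * ‖u‖) ^ 2)⁻¹ * ‖u‖)) t := fun t ht => by
    have h := Real.hasDerivAt_artanh ⟨by nlinarith [norm_nonneg u, ht.1], (hray t ht).2⟩
    exact (h.comp t (hasDerivAt_mul_const ‖u‖)).const_mul C
  have hspeed : ∀ t ∈ Icc (0 : ℝ) 1,
      ‖fderiv ℝ ω (mobius a (t * u))‖ * ‖deriv (mobius a) (t * u) * u‖ ≤
        C * ((1 - (t * ‖u‖) ^ 2)⁻¹ * ‖u‖) * ω (mobius a (t * u)) := fun t ht => by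
    have hle := mul_norm_deriv_mobius_le ha (hray_lt t ht) (hreg _ (hγ t ht))
    rw [(hray t ht).1] at hle
    calc _ = ‖fderiv ℝ ω (mobius a (t * u))‖ * ‖deriv (mobius a) (t * u)‖ * ‖u‖ := by
          rw [norm_mul, mul_assoc]
      _ ≤ (1 - (t * ‖u‖) ^ 2)⁻¹ * (C * ω (mobius a (t * u))) * ‖u‖ :=
          mul_le_mul_of_nonneg_right hle (norm_nonneg u)
      _ = _ := by ring
  have key := le_exp_sub_mul_of_norm_fderiv_mul_norm_deriv_le zero_le_one
    (fun t ht => hasDerivAt_mobius_ofReal_mul ha (hray_lt t ht)) hρ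
    (fun t ht => hω.differentiableAt (isOpen_unitDisc.mem_nhds (hγ t ht)))
    (fun t ht => hpos _ (hγ t ht)) hspeed
  simpa [mobius_zero, Real.artanh_zero] using key

theorem weight_le_exp_hypDist_mul_general
    (C : ℝ)
    (ω : ℂ → ℝ) (hωpos : ∀ z ∈ unitDisc, 0 < ω z)
    (hωC1 : ContDiffOn ℝ 1 ω unitDisc)
    (hreg : ∀ z ∈ unitDisc, (1 - ‖z‖ ^ 2) * ‖fderivWithin ℝ ω unitDisc z‖ ≤ C * ω z) :
    ∀ z ∈ unitDisc, ∀ w ∈ unitDisc,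
      ω z ≤ Real.exp (C * hypDist z w) * ω w := by
  intro z hz w hw
  have hreg' : ∀ ζ ∈ unitDisc, (1 - ‖ζ‖ ^ 2) * ‖fderiv ℝ ω ζ‖ ≤ C * ω ζ := fun ζ hζ => by
    simpa only [fderivWithin_of_isOpen isOpen_unitDisc hζ] using hreg ζ hζ
  rw [mem_unitDisc] at hz hw
  have h := weight_le_exp_artanh_mul_mobius hz (norm_mobius_lt_one hz hw)
    (hωC1.differentiableOn one_ne_zero) hωpos hreg'
  rwa [mobius_mobius hz hw, ← hypDist_eq_artanh hz hw] at h

/-- A `C¹` weight `ω` satisfying `(1-|z|²)|∇ω(z)| ≤ C ω(z)` on the unit disc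
satisfies the Harnack-type estimate `ω(z) ≤ e^{C δ(z,w)} ω(w)` for the hyperbolic
distance `δ`. -/
theorem weight_le_exp_hypDist_mul
    (C : ℝ) (hC : 0 < C)
    (ω : ℂ → ℝ) (hωpos : ∀ z ∈ unitDisc, 0 < ω z)
    (hωC1 : ContDiffOn ℝ 1 ω unitDisc)
    (hreg : ∀ z ∈ unitDisc, (1 - ‖z‖ ^ 2) * ‖fderivWithin ℝ ω unitDisc z‖ ≤ C * ω z) :
    ∀ z ∈ unitDisc, ∀ w ∈ unitDisc,
      ω z ≤ Real.exp (C * hypDist z w) * ω w :=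
  weight_le_exp_hypDist_mul_general C ω hωpos hωC1 hreg
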